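/- arXiv:1208.0472 — 5 statements merged into one kernel-verified Lean document; each statement's English description precedes it below -/
import Mathlib

section
/- Let ψ : Y → X be a Borel measurable map between Polish spaces, let η be a probability measure on X and γ₀ a probability measure on Y. Then the relative entropy of η with respect to the pushforward ψ(γ₀) equals the infimum, over all probability measures γ on Y with ψ(γ) = η, of the relative entropy of γ with respect to γ₀ (with inf ∅ = ∞). -/
/-!
For `γ` with `ψ(γ) = η`, the inequality `R(η ‖ ψ(γ₀)) ≤ R(γ ‖ γ₀)` is the data processing
inequality for the Kullback–Leibler divergence. Equality is attained by reweighting `γ₀` with the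
density `(dη / dψ(γ₀)) ∘ ψ`: this keeps the conditional law of `γ₀` given `ψ`, changes the law of
`ψ` to `η`, and its log-likelihood ratio against `γ₀` is that of `η` against `ψ(γ₀)`, composed
with `ψ`.
-/

open MeasureTheory ProbabilityTheory Real Filter Topology
open scoped Classical ENNReal NNReal

/-- Relative entropy `R(ν ‖ μ)`: `∫ log (dν/dμ) dν` if `ν ≪ μ` (and the log-likelihood ratio
is `ν`-integrable), and `∞` otherwise. -/
noncomputable def relEnt {S : Type*} [MeasurableSpace S] (ν μ : Measure S) : EReal :=
  if ν ≪ μ ∧ Integrable (llr ν μ) ν then ((∫ x, llr ν μ x ∂ν : ℝ) : EReal) else ⊤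

open InformationTheory

section RelEnt

variable {α β : Type*} [MeasurableSpace α] [MeasurableSpace β]

lemma relEnt_of_not_absolutelyContinuous {μ ν : Measure α} (h : ¬ μ ≪ ν) : relEnt μ ν = ⊤ := by
  simp [relEnt, h]

lemma relEnt_eq_klDiv (μ ν : Measure α) [IsFiniteMeasure μ] [IsFiniteMeasure ν]
    (hμν : μ Set.univ = ν Set.univ) : relEnt μ ν = klDiv μ ν := by
  by_cases h : μ ≪ ν ∧ Integrable (llr μ ν) μ
  · obtain ⟨hac, hint⟩ := h
    have hmass : ν.real Set.univ - μ.real Set.univ = 0 := by simp [measureReal_def, hμν]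
    have hnonneg := integral_llr_add_sub_measure_univ_nonneg hac hint
    rw [add_sub_assoc, hmass, add_zero] at hnonneg
    rw [relEnt, if_pos ⟨hac, hint⟩, klDiv_of_ac_of_integrable hac hint,
      add_sub_assoc, hmass, add_zero, EReal.coe_ennreal_ofReal, max_eq_left hnonneg]
  · rw [relEnt, if_neg h, klDiv_eq_top_iff.mpr fun hac hint ↦ h ⟨hac, hint⟩,
      EReal.coe_ennreal_top]

lemma relEnt_map_le {f : α → β} (hf : Measurable f) (μ ν : Measure α) [IsFiniteMeasure μ]
    [IsFiniteMeasure ν] (hμν : μ Set.univ = ν Set.univ) :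
    relEnt (μ.map f) (ν.map f) ≤ relEnt μ ν := by
  have hμν' : μ.map f Set.univ = ν.map f Set.univ := by
    rwa [Measure.map_apply hf MeasurableSet.univ, Measure.map_apply hf MeasurableSet.univ]
  rw [relEnt_eq_klDiv _ _ hμν', relEnt_eq_klDiv _ _ hμν, EReal.coe_ennreal_le_coe_ennreal_iff]
  exact klDiv_map_le μ ν hf

end RelEnt

section Lift

variable {X Y : Type*} [MeasurableSpace X] [MeasurableSpace Y]

lemma map_withDensity_comp {ψ : Y → X} (hψ : Measurable ψ) {f : X → ℝ≥0∞} (hf : Measurable f)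
    (ν : Measure Y) : (ν.withDensity (f ∘ ψ)).map ψ = (ν.map ψ).withDensity f := by
  ext s hs
  rw [Measure.map_apply hψ hs, withDensity_apply _ (hψ hs), withDensity_apply _ hs,
    setLIntegral_map hs hf hψ]
  rfl

noncomputable def liftMeasure (ψ : Y → X) (γ₀ : Measure Y) (η : Measure X) : Measure Y :=
  γ₀.withDensity (η.rnDeriv (γ₀.map ψ) ∘ ψ)

variable {ψ : Y → X} {γ₀ : Measure Y} {η : Measure X}

lemma map_liftMeasure (hψ : Measurable ψ) [IsFiniteMeasure γ₀] [SigmaFinite η]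
    (hac : η ≪ γ₀.map ψ) : (liftMeasure ψ γ₀ η).map ψ = η := by
  rw [liftMeasure, map_withDensity_comp hψ (Measure.measurable_rnDeriv _ _),
    Measure.withDensity_rnDeriv_eq _ _ hac]

lemma isProbabilityMeasure_liftMeasure (hψ : Measurable ψ) [IsFiniteMeasure γ₀]
    [IsProbabilityMeasure η] (hac : η ≪ γ₀.map ψ) : IsProbabilityMeasure (liftMeasure ψ γ₀ η) :=
  ⟨by rw [← Set.preimage_univ (f := ψ), ← Measure.map_apply hψ MeasurableSet.univ,
    map_liftMeasure hψ hac, measure_univ]⟩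

lemma llr_liftMeasure_ae (hψ : Measurable ψ) [SigmaFinite γ₀] :
    llr (liftMeasure ψ γ₀ η) γ₀ =ᵐ[γ₀] fun y ↦ llr η (γ₀.map ψ) (ψ y) := by
  filter_upwards [Measure.rnDeriv_withDensity γ₀ ((η.measurable_rnDeriv (γ₀.map ψ)).comp hψ)]
    with y hy
  rw [llr, liftMeasure, hy, Function.comp_apply, llr]

lemma relEnt_liftMeasure (hψ : Measurable ψ) [IsFiniteMeasure γ₀] [SigmaFinite η]
    (hac : η ≪ γ₀.map ψ) : relEnt (liftMeasure ψ γ₀ η) γ₀ = relEnt η (γ₀.map ψ) := by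
  have hlift_ac : liftMeasure ψ γ₀ η ≪ γ₀ := withDensity_absolutelyContinuous _ _
  have hllr := hlift_ac.ae_le (llr_liftMeasure_ae (η := η) hψ)
  have hmap := map_liftMeasure hψ hac
  have hmeas : AEStronglyMeasurable (llr η (γ₀.map ψ)) ((liftMeasure ψ γ₀ η).map ψ) :=
    (stronglyMeasurable_llr _ _).aestronglyMeasurable
  have hint : Integrable (llr (liftMeasure ψ γ₀ η) γ₀) (liftMeasure ψ γ₀ η) ↔
      Integrable (llr η (γ₀.map ψ)) η := by
    rw [integrable_congr hllr]
    exact (integrable_map_measure hmeas hψ.aemeasurable).symm.trans (by rw [hmap])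
  have hintegral : ∫ y, llr (liftMeasure ψ γ₀ η) γ₀ y ∂(liftMeasure ψ γ₀ η) =
      ∫ x, llr η (γ₀.map ψ) x ∂η := by
    rw [integral_congr_ae hllr, ← integral_map hψ.aemeasurable hmeas, hmap]
  simp only [relEnt, hlift_ac, hac, true_and, hint, hintegral]

end Lift

theorem stmt0_general {X Y : Type*}
    [MeasurableSpace X]
    [MeasurableSpace Y]
    (ψ : Y → X) (hψ : Measurable ψ)
    (η : Measure X) [IsProbabilityMeasure η]
    (γ₀ : Measure Y) [IsProbabilityMeasure γ₀] :
    relEnt η (γ₀.map ψ) =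
      ⨅ γ : {γ : Measure Y // IsProbabilityMeasure γ ∧ γ.map ψ = η}, relEnt γ.1 γ₀ := by
  refine le_antisymm (le_iInf fun ⟨γ, hγ, hγη⟩ ↦ ?_) ?_
  · subst hγη
    exact relEnt_map_le hψ γ γ₀ (by simp)
  · by_cases hac : η ≪ γ₀.map ψ
    · exact iInf_le_of_le ⟨liftMeasure ψ γ₀ η, isProbabilityMeasure_liftMeasure hψ hac,
        map_liftMeasure hψ hac⟩ (relEnt_liftMeasure hψ hac).le
    · rw [relEnt_of_not_absolutelyContinuous hac]
      exact le_top

/-- Contraction property of relative entropy: for Borel measurable `ψ : Y → X` between Polish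
spaces, `R(η ‖ ψ(γ₀)) = inf { R(γ ‖ γ₀) : γ ∈ P(Y), ψ(γ) = η }` (with `inf ∅ = ∞`). -/
theorem stmt0 {X Y : Type*}
    [MeasurableSpace X] [TopologicalSpace X] [PolishSpace X] [BorelSpace X]
    [MeasurableSpace Y] [TopologicalSpace Y] [PolishSpace Y] [BorelSpace Y]
    (ψ : Y → X) (hψ : Measurable ψ)
    (η : Measure X) [IsProbabilityMeasure η]
    (γ₀ : Measure Y) [IsProbabilityMeasure γ₀] :
    relEnt η (γ₀.map ψ) =
      ⨅ γ : {γ : Measure Y // IsProbabilityMeasure γ ∧ γ.map ψ = η}, relEnt γ.1 γ₀ :=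
  stmt0_general ψ hψ η γ₀
end

section
/- Let ψ : Y → X be Borel measurable between Polish spaces, γ₀ a probability measure on Y, and η a probability measure on X with R(η‖ψ(γ₀)) < ∞. Let f = dη/d(ψ(γ₀)) and define γ(dy) := f(ψ(y)) γ₀(dy). Then γ is a probability measure on Y with pushforward ψ(γ) = η, and R(γ‖γ₀) = R(η‖ψ(γ₀)); in particular γ attains the infimum in the contraction formula for relative entropy. -/
open MeasureTheory ProbabilityTheory Real Filter Topology
open scoped Classical ENNReal NNReal

/-! The log-likelihood ratio of `γ = f(ψ) γ₀` against `γ₀` is the pullback along `ψ` of that of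
`η = f ψ(γ₀)` against `ψ(γ₀)`, so `ψ` loses no information about the pair `(γ, γ₀)` and relative
entropy is preserved: `R(γ ‖ γ₀) = R(η ‖ ψ(γ₀))`. Any other `γ'` with `ψ(γ') = η` satisfies
`R(η ‖ ψ(γ₀)) ≤ R(γ' ‖ γ₀)` by the data processing inequality, so `γ` is a minimizer.
On probability measures `relEnt` agrees with `klDiv`, whose truncation at `0` is vacuous by
Gibbs' inequality. -/

open InformationTheory

section PullbackDensity

variable {X Y : Type*} [MeasurableSpace X] [MeasurableSpace Y] {ψ : Y → X} {f : X → ℝ≥0∞}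

lemma map_withDensity_comp_s1 (μ : Measure Y) (hψ : Measurable ψ) (hf : Measurable f) :
    (μ.withDensity fun y => f (ψ y)).map ψ = (μ.map ψ).withDensity f := by
  ext s hs
  rw [Measure.map_apply hψ hs, withDensity_apply _ (hψ hs), withDensity_apply _ hs,
    setLIntegral_map hs hf hψ]

lemma llr_withDensity_comp_ae_eq (μ : Measure Y) [IsFiniteMeasure μ] (hψ : Measurable ψ)
    (hf : Measurable f) :
    llr (μ.withDensity fun y => f (ψ y)) μ
      =ᵐ[μ] fun y => llr ((μ.map ψ).withDensity f) (μ.map ψ) (ψ y) := by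
  have hpull : ∀ᵐ y ∂μ, ((μ.map ψ).withDensity f).rnDeriv (μ.map ψ) (ψ y) = f (ψ y) :=
    ae_of_ae_map hψ.aemeasurable (Measure.rnDeriv_withDensity _ hf)
  have hdens : (μ.withDensity fun y => f (ψ y)).rnDeriv μ =ᵐ[μ] fun y => f (ψ y) :=
    Measure.rnDeriv_withDensity μ (hf.comp hψ)
  filter_upwards [hdens, hpull] with y hγ hη
  simp only [llr, hγ, hη]

end PullbackDensity

namespace InformationTheory

variable {X Y : Type*} [MeasurableSpace X] [MeasurableSpace Y] {ψ : Y → X}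

lemma klDiv_map_eq_of_llr_ae_eq_comp {γ μ : Measure Y} (hψ : Measurable ψ) (hγμ : γ ≪ μ)
    (hllr : llr γ μ =ᵐ[γ] fun y => llr (γ.map ψ) (μ.map ψ) (ψ y)) :
    klDiv (γ.map ψ) (μ.map ψ) = klDiv γ μ := by
  have hmeas : AEStronglyMeasurable (llr (γ.map ψ) (μ.map ψ)) (γ.map ψ) :=
    (measurable_llr _ _).aestronglyMeasurable
  have hint : Integrable (llr (γ.map ψ) (μ.map ψ)) (γ.map ψ) ↔ Integrable (llr γ μ) γ := by
    rw [integrable_congr hllr, integrable_map_measure hmeas hψ.aemeasurable]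
    rfl
  by_cases h : Integrable (llr γ μ) γ
  · rw [klDiv_of_ac_of_integrable (hγμ.map hψ) (hint.mpr h), klDiv_of_ac_of_integrable hγμ h,
      integral_map hψ.aemeasurable hmeas, ← integral_congr_ae hllr,
      map_measureReal_apply hψ MeasurableSet.univ, map_measureReal_apply hψ MeasurableSet.univ,
      Set.preimage_univ]
  · rw [klDiv_of_not_integrable h, klDiv_of_not_integrable (hint.not.mpr h)]

lemma klDiv_withDensity_comp (μ : Measure Y) [IsFiniteMeasure μ] (hψ : Measurable ψ)
    {f : X → ℝ≥0∞} (hf : Measurable f) :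
    klDiv (μ.withDensity fun y => f (ψ y)) μ = klDiv ((μ.map ψ).withDensity f) (μ.map ψ) := by
  set γ := μ.withDensity fun y => f (ψ y)
  have hγμ : γ ≪ μ := withDensity_absolutelyContinuous μ _
  have hllr : llr γ μ =ᵐ[γ] fun y => llr (γ.map ψ) (μ.map ψ) (ψ y) := by
    rw [map_withDensity_comp_s1 μ hψ hf]
    exact hγμ.ae_le (llr_withDensity_comp_ae_eq μ hψ hf)
  rw [← klDiv_map_eq_of_llr_ae_eq_comp hψ hγμ hllr, map_withDensity_comp_s1 μ hψ hf]

lemma klDiv_withDensity_comp_le (μ : Measure Y) [IsFiniteMeasure μ] (hψ : Measurable ψ)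
    {f : X → ℝ≥0∞} (hf : Measurable f) {γ : Measure Y} [IsFiniteMeasure γ]
    (hγ : γ.map ψ = (μ.map ψ).withDensity f) :
    klDiv (μ.withDensity fun y => f (ψ y)) μ ≤ klDiv γ μ := by
  rw [klDiv_withDensity_comp μ hψ hf, ← hγ]
  exact klDiv_map_le γ μ hψ

end InformationTheory

lemma relEnt_eq_klDiv_s1 {S : Type*} [MeasurableSpace S] (ν μ : Measure S)
    [IsProbabilityMeasure ν] [IsProbabilityMeasure μ] : relEnt ν μ = klDiv ν μ := by
  by_cases h : ν ≪ μ ∧ Integrable (llr ν μ) ν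
  · have hgibbs := integral_llr_add_sub_measure_univ_nonneg h.1 h.2
    simp only [probReal_univ, add_sub_cancel_right] at hgibbs
    rw [relEnt, if_pos h, klDiv_of_ac_of_integrable h.1 h.2]
    simp only [probReal_univ, add_sub_cancel_right, EReal.coe_ennreal_ofReal, max_eq_left hgibbs]
  · rw [relEnt, if_neg h, klDiv_eq_top_iff.mpr (not_and.mp h), EReal.coe_ennreal_top]

theorem stmt1_general {X Y : Type*}
    [MeasurableSpace X] [MeasurableSpace Y]
    (ψ : Y → X) (hψ : Measurable ψ)
    (η : Measure X) [IsProbabilityMeasure η]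
    (γ₀ : Measure Y) [IsProbabilityMeasure γ₀]
    (f : X → ℝ≥0∞) (hf : Measurable f) (hη : η = (γ₀.map ψ).withDensity f) :
    IsProbabilityMeasure (γ₀.withDensity fun y => f (ψ y)) ∧
    (γ₀.withDensity fun y => f (ψ y)).map ψ = η ∧
    relEnt (γ₀.withDensity fun y => f (ψ y)) γ₀ = relEnt η (γ₀.map ψ) ∧
    relEnt (γ₀.withDensity fun y => f (ψ y)) γ₀ =
      ⨅ γ : {γ : Measure Y // IsProbabilityMeasure γ ∧ γ.map ψ = η}, relEnt γ.1 γ₀ := by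
  subst hη
  have hmap := map_withDensity_comp_s1 γ₀ hψ hf
  have : IsProbabilityMeasure (γ₀.map ψ) := Measure.isProbabilityMeasure_map hψ.aemeasurable
  have hγ : IsProbabilityMeasure (γ₀.withDensity fun y => f (ψ y)) :=
    (Measure.isProbabilityMeasure_map_iff hψ.aemeasurable).mp (hmap ▸ inferInstance)
  refine ⟨hγ, hmap, ?_, ?_⟩
  · rw [relEnt_eq_klDiv_s1, relEnt_eq_klDiv_s1, klDiv_withDensity_comp γ₀ hψ hf]
  · refine le_antisymm (le_iInf fun ⟨γ, _, hγψ⟩ => ?_) (iInf_le_of_le ⟨_, hγ, hmap⟩ le_rfl)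
    rw [relEnt_eq_klDiv_s1, relEnt_eq_klDiv_s1]
    exact EReal.coe_ennreal_le_coe_ennreal_iff.mpr (klDiv_withDensity_comp_le γ₀ hψ hf hγψ)

/-- The explicit minimizer in the contraction formula: if `R(η ‖ ψ(γ₀)) < ∞` and `f` is a
Radon–Nikodym density of `η` w.r.t. `ψ(γ₀)`, then `γ(dy) := f(ψ(y)) γ₀(dy)` is a probability
measure with `ψ(γ) = η` and `R(γ ‖ γ₀) = R(η ‖ ψ(γ₀))`; in particular `γ` attains the infimum. -/
theorem stmt1 {X Y : Type*}
    [MeasurableSpace X] [TopologicalSpace X] [PolishSpace X] [BorelSpace X]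
    [MeasurableSpace Y] [TopologicalSpace Y] [PolishSpace Y] [BorelSpace Y]
    (ψ : Y → X) (hψ : Measurable ψ)
    (η : Measure X) [IsProbabilityMeasure η]
    (γ₀ : Measure Y) [IsProbabilityMeasure γ₀]
    (hfin : relEnt η (γ₀.map ψ) < ⊤)
    (f : X → ℝ≥0∞) (hf : Measurable f) (hη : η = (γ₀.map ψ).withDensity f) :
    IsProbabilityMeasure (γ₀.withDensity fun y => f (ψ y)) ∧
    (γ₀.withDensity fun y => f (ψ y)).map ψ = η ∧
    relEnt (γ₀.withDensity fun y => f (ψ y)) γ₀ = relEnt η (γ₀.map ψ) ∧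
    relEnt (γ₀.withDensity fun y => f (ψ y)) γ₀ =
      ⨅ γ : {γ : Measure Y // IsProbabilityMeasure γ ∧ γ.map ψ = η}, relEnt γ.1 γ₀ :=
  stmt1_general ψ hψ η γ₀ f hf hη
end

section
/- In the setting of the previous statement, for every θ ∈ P(R²), R(θ‖Ψ_{γ₀}(θ)) = R(θ‖γ₀) − F(θ), where F(θ) = ∫ f(θ,(y,ỹ)) dθ(y,ỹ) with f(θ,(y,ỹ)) = (y + m_b(θ))·ỹ − ½|y + m_b(θ)|², and F(θ) := −∞ if f(θ,·) is not θ-integrable; both sides equal ∞ when θ is not absolutely continuous with respect to Ψ_{γ₀}(θ). -/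
open MeasureTheory ProbabilityTheory Real Filter Topology
open scoped Classical ENNReal NNReal

/-- The bivariate standard normal distribution on `ℝ²`. -/
noncomputable def stdNormal2 : Measure (ℝ × ℝ) :=
  (ProbabilityTheory.gaussianReal 0 1).prod (ProbabilityTheory.gaussianReal 0 1)

/-- `m_b(θ) = ∫ b(x) dθ(x, x̃)`. -/
noncomputable def mB (b : ℝ → ℝ) (θ : Measure (ℝ × ℝ)) : ℝ := ∫ p, b p.1 ∂θ

/-- `f(θ,(y,ỹ)) = (y + m_b(θ))·ỹ − ½|y + m_b(θ)|²`. -/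
noncomputable def fToy (b : ℝ → ℝ) (θ : Measure (ℝ × ℝ)) (p : ℝ × ℝ) : ℝ :=
  (p.1 + mB b θ) * p.2 - |p.1 + mB b θ| ^ 2 / 2

/-- `F(θ) = ∫ f(θ,·) dθ` if `f(θ,·)` is `θ`-integrable, and `−∞` otherwise. -/
noncomputable def FToy (b : ℝ → ℝ) (θ : Measure (ℝ × ℝ)) : EReal :=
  if Integrable (fToy b θ) θ then ((∫ p, fToy b θ p ∂θ : ℝ) : EReal) else ⊥

/-
`Ψ_{γ₀}(θ)` is `γ₀` tilted by `f(θ,·)`: given `y`, the sheared coordinate `y + m_b(θ) + ỹ` is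
`N(y + m_b(θ), 1)`, whose density against `N(0,1)` is `exp f(θ,(y,·))` (Cameron–Martin). Hence
`log dθ/dΨ = log dθ/dγ₀ − f` and the identity follows by integrating against `θ`, provided `f` is
`θ`-integrable. That is automatic when `R(θ‖Ψ) < ∞`: `f` grows quadratically, so by Fernique it has
an exponential moment under the Gaussian law `Ψ`, and Young's inequality
`a s ≤ a log a − a + exp s` with `a = dθ/dΨ` bounds `∫ |f| dθ` by the entropy and that moment.
In every other case both sides are `∞`.
-/

section RelEnt

variable {α : Type*} [MeasurableSpace α] {θ μ : Measure α}

lemma relEnt_of_integrable_llr (hac : θ ≪ μ) (hint : Integrable (llr θ μ) θ) :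
    relEnt θ μ = ((∫ x, llr θ μ x ∂θ : ℝ) : EReal) :=
  if_pos ⟨hac, hint⟩

lemma relEnt_of_not_absolutelyContinuous_s7 (hac : ¬ θ ≪ μ) : relEnt θ μ = ⊤ :=
  if_neg fun h ↦ hac h.1

lemma relEnt_ne_bot : relEnt θ μ ≠ ⊥ := by
  unfold relEnt
  split_ifs <;> simp

end RelEnt

lemma mul_le_mul_log_sub_add_exp {a : ℝ} (ha : 0 ≤ a) (s : ℝ) :
    a * s ≤ a * log a - a + exp s := by
  rcases ha.eq_or_lt with rfl | ha
  · simp [(exp_pos s).le]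
  · have h := mul_le_mul_of_nonneg_left (add_one_le_exp (s - log a)) ha.le
    rw [exp_sub, exp_log ha, mul_div_cancel₀ _ ha.ne'] at h
    linarith

lemma integrable_of_integrable_llr_of_integrable_exp_mul_abs {α : Type*} [MeasurableSpace α]
    {θ ν : Measure α} [SigmaFinite θ] [SigmaFinite ν] (hac : θ ≪ ν)
    (hllr : Integrable (llr θ ν) θ) {g : α → ℝ} (hg : Measurable g) {t : ℝ} (ht : 0 < t)
    (hexp : Integrable (fun x ↦ exp (t * |g x|)) ν) : Integrable g θ := by
  rw [← integrable_rnDeriv_smul_iff hac]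
  set a : α → ℝ := fun x ↦ (θ.rnDeriv ν x).toReal
  have ha : Measurable a := (Measure.measurable_rnDeriv θ ν).ennreal_toReal
  have hent : Integrable (fun x ↦ a x * |log (a x)|) ν :=
    (integrable_rnDeriv_smul_iff hac).2 hllr.abs
  refine ((hent.add hexp).div_const t).mono' (ha.mul hg).aestronglyMeasurable
    (ae_of_all _ fun x ↦ ?_)
  have ha0 : 0 ≤ a x := ENNReal.toReal_nonneg
  have young := mul_le_mul_log_sub_add_exp ha0 (t * |g x|)
  have hlog : a x * log (a x) ≤ a x * |log (a x)| :=
    mul_le_mul_of_nonneg_left (le_abs_self _) ha0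
  rw [le_div_iff₀ ht, smul_eq_mul, norm_mul, Real.norm_of_nonneg ha0, Real.norm_eq_abs,
    Pi.add_apply]
  nlinarith

section Tilted

variable {α : Type*} [MeasurableSpace α] {θ μ : Measure α} {f : α → ℝ}

lemma absolutelyContinuous_tilted_iff (hf : Integrable (fun x ↦ exp (f x)) μ) :
    θ ≪ μ.tilted f ↔ θ ≪ μ :=
  ⟨fun h ↦ h.trans (tilted_absolutelyContinuous μ f),
    fun h ↦ h.trans (absolutelyContinuous_tilted hf)⟩

theorem relEnt_tilted_right [IsProbabilityMeasure θ] [SigmaFinite μ] (hf : Measurable f)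
    (h_one : ∫ x, exp (f x) ∂μ = 1) {t : ℝ} (ht : 0 < t)
    (hexp : Integrable (fun x ↦ exp (t * |f x|)) (μ.tilted f)) :
    relEnt θ (μ.tilted f) =
      relEnt θ μ - if Integrable f θ then ((∫ x, f x ∂θ : ℝ) : EReal) else ⊥ := by
  have hfμ : Integrable (fun x ↦ exp (f x)) μ := .of_integral_ne_zero (by simp [h_one])
  by_cases hfin : θ ≪ μ.tilted f ∧ Integrable (llr θ (μ.tilted f)) θ
  · obtain ⟨hac, hllr⟩ := hfin
    have hacμ : θ ≪ μ := (absolutelyContinuous_tilted_iff hfμ).1 hac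
    have hfθ : Integrable f θ :=
      integrable_of_integrable_llr_of_integrable_exp_mul_abs hac hllr hf ht hexp
    have hllrμ : Integrable (llr θ μ) θ := by
      refine (integrable_congr ?_).2 (hllr.add hfθ)
      filter_upwards [llr_tilted_right hacμ hfμ] with x hx
      rw [Pi.add_apply, hx, h_one, log_one]
      ring
    rw [relEnt_of_integrable_llr hac hllr, relEnt_of_integrable_llr hacμ hllrμ, if_pos hfθ,
      integral_llr_tilted_right hacμ hfθ hfμ hllrμ, h_one, log_one, add_zero, EReal.coe_sub]
  · have htop : relEnt θ (μ.tilted f) = ⊤ := if_neg hfin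
    rw [htop]
    split_ifs with hfθ
    · suffices relEnt θ μ = ⊤ by rw [this, EReal.top_sub_coe]
      exact if_neg fun ⟨hacμ, hllrμ⟩ ↦ hfin ⟨(absolutelyContinuous_tilted_iff hfμ).2 hacμ,
        integrable_llr_tilted_right hacμ hfθ hllrμ hfμ⟩
    · exact (EReal.sub_bot relEnt_ne_bot).symm

end Tilted

lemma ProbabilityTheory.IsGaussian.exists_integrable_exp_mul_abs {E : Type*}
    [NormedAddCommGroup E] [NormedSpace ℝ E] [MeasurableSpace E] [BorelSpace E] [CompleteSpace E]
    [SecondCountableTopology E]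
    (μ : Measure E) [IsGaussian μ] {g : E → ℝ} (hg : AEStronglyMeasurable g μ) {K L : ℝ}
    (hK : 0 < K) (hgK : ∀ x, |g x| ≤ K * ‖x‖ ^ 2 + L) :
    ∃ t > 0, Integrable (fun x ↦ exp (t * |g x|)) μ := by
  obtain ⟨C, hC, hint⟩ := exists_integrable_exp_sq μ
  refine ⟨C / K, by positivity, (hint.const_mul (exp (C / K * L))).mono' (by fun_prop)
    (ae_of_all _ fun x ↦ ?_)⟩
  rw [norm_of_nonneg (exp_pos _).le, ← exp_add, exp_le_exp]
  calc C / K * |g x| ≤ C / K * (K * ‖x‖ ^ 2 + L) := by gcongr; exact hgK x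
    _ = C / K * L + C * ‖x‖ ^ 2 := by field_simp; ring

lemma gaussianReal_eq_withDensity_exp (m : ℝ) :
    gaussianReal m 1 =
      (gaussianReal 0 1).withDensity fun z ↦ ENNReal.ofReal (exp (m * z - m ^ 2 / 2)) := by
  rw [gaussianReal_of_var_ne_zero _ one_ne_zero, gaussianReal_of_var_ne_zero _ one_ne_zero,
    ← withDensity_mul _ (measurable_gaussianPDF _ _) (by fun_prop)]
  congr 1
  ext x
  simp only [Pi.mul_apply, gaussianPDF, ← ENNReal.ofReal_mul (gaussianPDFReal_nonneg _ _ _)]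
  congr 1
  simp only [gaussianPDFReal, NNReal.coe_one, mul_one, sub_zero, mul_assoc, ← exp_add]
  ring_nf

/-- Cameron–Martin fibrewise: given `x`, the second coordinate `g x + z` is `N(g x, 1)`. -/
lemma map_prod_gaussianReal_shear {α : Type*} [MeasurableSpace α] (μ : Measure α) [SFinite μ]
    {g : α → ℝ} (hg : Measurable g) :
    (μ.prod (gaussianReal 0 1)).map (fun p ↦ (p.1, g p.1 + p.2)) =
      (μ.prod (gaussianReal 0 1)).withDensity
        fun p ↦ ENNReal.ofReal (exp (g p.1 * p.2 - g p.1 ^ 2 / 2)) := by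
  have hshear : Measurable fun p : α × ℝ ↦ (p.1, g p.1 + p.2) := by fun_prop
  ext s hs
  rw [Measure.map_apply hshear hs, withDensity_apply _ hs, Measure.prod_apply (hshear hs),
    ← lintegral_indicator hs, lintegral_prod _ (by fun_prop)]
  refine lintegral_congr fun x ↦ ?_
  have hsx : MeasurableSet (Prod.mk x ⁻¹' s) := measurable_prodMk_left hs
  calc gaussianReal 0 1 ((g x + ·) ⁻¹' (Prod.mk x ⁻¹' s))
      = gaussianReal (g x) 1 (Prod.mk x ⁻¹' s) := by
        rw [← Measure.map_apply (by fun_prop) hsx, gaussianReal_map_const_add, zero_add]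
    _ = ∫⁻ z, (Prod.mk x ⁻¹' s).indicator
          (fun z ↦ ENNReal.ofReal (exp (g x * z - g x ^ 2 / 2))) z ∂gaussianReal 0 1 := by
        rw [gaussianReal_eq_withDensity_exp, withDensity_apply _ hsx, lintegral_indicator hsx]
    _ = _ := rfl

section ShearedGaussian

variable (b : ℝ → ℝ) (θ : Measure (ℝ × ℝ))

instance : IsGaussian stdNormal2 := by
  unfold stdNormal2
  infer_instance

@[fun_prop]
lemma measurable_fToy : Measurable (fToy b θ) := by
  unfold fToy
  fun_prop

lemma map_shear_stdNormal2_eq_withDensity :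
    stdNormal2.map (fun p : ℝ × ℝ ↦ (p.1, p.1 + mB b θ + p.2)) =
      stdNormal2.withDensity fun p ↦ ENNReal.ofReal (exp (fToy b θ p)) := by
  simp only [fToy, sq_abs]
  exact map_prod_gaussianReal_shear _ (measurable_add_const (mB b θ))

lemma integral_exp_fToy : ∫ p, exp (fToy b θ p) ∂stdNormal2 = 1 := by
  have hprob : (stdNormal2.withDensity fun p ↦ ENNReal.ofReal (exp (fToy b θ p))) Set.univ = 1 := by
    have : IsProbabilityMeasure (stdNormal2.map fun p : ℝ × ℝ ↦ (p.1, p.1 + mB b θ + p.2)) :=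
      Measure.isProbabilityMeasure_map (by fun_prop)
    rw [← map_shear_stdNormal2_eq_withDensity, measure_univ]
  rw [withDensity_apply _ MeasurableSet.univ, Measure.restrict_univ] at hprob
  rw [integral_eq_lintegral_of_nonneg_ae (ae_of_all _ fun _ ↦ (exp_pos _).le)
    (measurable_fToy b θ).exp.aestronglyMeasurable, hprob, ENNReal.toReal_one]

lemma map_shear_stdNormal2_eq_tilted :
    stdNormal2.map (fun p : ℝ × ℝ ↦ (p.1, p.1 + mB b θ + p.2)) = stdNormal2.tilted (fToy b θ) := by
  rw [map_shear_stdNormal2_eq_withDensity, Measure.tilted, integral_exp_fToy]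
  simp_rw [div_one]

lemma abs_fToy_shear_le (p : ℝ × ℝ) :
    |fToy b θ (p.1, p.1 + mB b θ + p.2)| ≤ 3 * ‖p‖ ^ 2 + 2 * mB b θ ^ 2 := by
  have hy : p.1 ^ 2 ≤ ‖p‖ ^ 2 := by
    rw [← sq_abs, ← Real.norm_eq_abs]; gcongr; exact norm_fst_le p
  have hz : p.2 ^ 2 ≤ ‖p‖ ^ 2 := by
    rw [← sq_abs, ← Real.norm_eq_abs]; gcongr; exact norm_snd_le p
  simp only [fToy, sq_abs]
  rw [abs_le]
  constructor <;> nlinarith [sq_nonneg (p.1 + mB b θ - p.2), sq_nonneg (p.1 + mB b θ + p.2),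
    sq_nonneg (p.1 - mB b θ)]

lemma exists_integrable_exp_mul_abs_fToy :
    ∃ t > 0, Integrable (fun p ↦ exp (t * |fToy b θ p|))
      (stdNormal2.map (fun p : ℝ × ℝ ↦ (p.1, p.1 + mB b θ + p.2))) := by
  obtain ⟨t, ht, hint⟩ := IsGaussian.exists_integrable_exp_mul_abs stdNormal2
    ((measurable_fToy b θ).comp (by fun_prop)).aestronglyMeasurable (by norm_num)
    (abs_fToy_shear_le b θ)
  exact ⟨t, ht, (integrable_map_measure (by fun_prop) (by fun_prop)).2 hint⟩

end ShearedGaussian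

theorem stmt7_general (b : ℝ → ℝ)
    (θ : Measure (ℝ × ℝ)) [IsProbabilityMeasure θ] :
    relEnt θ (Measure.map (fun p : ℝ × ℝ => (p.1, p.1 + mB b θ + p.2)) stdNormal2) =
      relEnt θ stdNormal2 - FToy b θ ∧
    (¬ θ ≪ Measure.map (fun p : ℝ × ℝ => (p.1, p.1 + mB b θ + p.2)) stdNormal2 →
      relEnt θ (Measure.map (fun p : ℝ × ℝ => (p.1, p.1 + mB b θ + p.2)) stdNormal2) = ⊤ ∧
      relEnt θ stdNormal2 = ⊤) := by
  obtain ⟨t, ht, hexp⟩ := exists_integrable_exp_mul_abs_fToy b θ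
  have h_one := integral_exp_fToy b θ
  rw [map_shear_stdNormal2_eq_tilted] at hexp ⊢
  refine ⟨relEnt_tilted_right (measurable_fToy b θ) h_one ht hexp, fun hac ↦
    ⟨relEnt_of_not_absolutelyContinuous_s7 hac, relEnt_of_not_absolutelyContinuous_s7 ?_⟩⟩
  rwa [← absolutelyContinuous_tilted_iff (f := fToy b θ) (.of_integral_ne_zero (by simp [h_one]))]

/-- `R(θ ‖ Ψ_{γ₀}(θ)) = R(θ ‖ γ₀) − F(θ)`; in particular both sides are `∞` when `θ` is not
absolutely continuous with respect to `Ψ_{γ₀}(θ)`. -/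
theorem stmt7 (b : ℝ → ℝ) (hb : Measurable b) (C : ℝ) (hbd : ∀ x, |b x| ≤ C)
    (θ : Measure (ℝ × ℝ)) [IsProbabilityMeasure θ] :
    relEnt θ (Measure.map (fun p : ℝ × ℝ => (p.1, p.1 + mB b θ + p.2)) stdNormal2) =
      relEnt θ stdNormal2 - FToy b θ ∧
    (¬ θ ≪ Measure.map (fun p : ℝ × ℝ => (p.1, p.1 + mB b θ + p.2)) stdNormal2 →
      relEnt θ (Measure.map (fun p : ℝ × ℝ => (p.1, p.1 + mB b θ + p.2)) stdNormal2) = ⊤ ∧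
      relEnt θ stdNormal2 = ⊤) :=
  stmt7_general b θ
end

section
/- Consider the toy model: γ₀ the bivariate standard normal law, b ∈ C_b(R), m_b(θ) = ∫ b(x) dθ(x,x̃), ψ(θ,(y,ỹ)) = (y, y + m_b(θ) + ỹ), Ψ_γ(μ) = γ ∘ ψ(μ,·)⁻¹. Then for every γ ∈ P(R²), the fixed point equation μ = Ψ_γ(μ) has the unique solution μ*(γ) = Ψ_γ(γ), and the map γ ↦ Ψ_γ(γ) is continuous on P(R²) with the weak topology. -/
/-!
The map `ψ(θ, ·)` does not move the first coordinate, so `m_b(Ψ_γ(μ)) = m_b(γ)` for every `μ`;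
a fixed point `μ` therefore has `m_b(μ) = m_b(γ)` and equals `Ψ_γ(γ)`. For continuity, `Ψ_γ(γ)`
is the push-forward of `γ ⊗ δ_{m_b(γ)}` under the continuous map `((y, ỹ), c) ↦ (y, y + c + ỹ)`:
`γ ↦ m_b(γ)` is weakly continuous because `b ∘ fst` is bounded and continuous, and so are
`x ↦ δ_x`, products of probability measures, and push-forwards under continuous maps.
-/

open MeasureTheory ProbabilityTheory Real Filter Topology
open scoped Classical ENNReal NNReal

namespace MeasureTheory.ProbabilityMeasure

variable {X Y Z : Type*} [MeasurableSpace X] [MeasurableSpace Y] [MeasurableSpace Z]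

lemma map_prod_diracProba (μ : ProbabilityMeasure X) (y : Y) {g : X × Y → Z}
    (hg : Measurable g) :
    (μ.prod (diracProba y)).map hg.aemeasurable =
      μ.map (hg.comp (measurable_prodMk_right (y := y))).aemeasurable := by
  apply toMeasure_injective
  rw [toMeasure_map, toMeasure_map, toMeasure_prod]
  exact (congrArg (Measure.map g) (Measure.prod_dirac y)).trans
    (Measure.map_map hg measurable_prodMk_right)

open TopologicalSpace in
theorem continuous_map_comp_prodMk_right [TopologicalSpace X] [TopologicalSpace Y]
    [TopologicalSpace Z] [SecondCountableTopology X] [SecondCountableTopology Y]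
    [PseudoMetrizableSpace X] [PseudoMetrizableSpace Y]
    [OpensMeasurableSpace X] [OpensMeasurableSpace Y] [BorelSpace Z]
    {g : X × Y → Z} (hg : Continuous g) :
    Continuous fun p : ProbabilityMeasure X × Y ↦
      p.1.map (hg.measurable.comp (measurable_prodMk_right (y := p.2))).aemeasurable := by
  have hprod : Continuous fun p : ProbabilityMeasure X × Y ↦ p.1.prod (diracProba p.2) :=
    continuous_prod.comp (continuous_fst.prodMk (continuous_diracProba.comp continuous_snd))
  convert (continuous_map hg).comp hprod with p
  exact (map_prod_diracProba p.1 p.2 hg.measurable).symm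

end MeasureTheory.ProbabilityMeasure

lemma mB_map_of_fst_eq (b : ℝ → ℝ) (hb : Measurable b) (θ : Measure (ℝ × ℝ))
    {f : ℝ × ℝ → ℝ × ℝ} (hf : Measurable f) (hfst : ∀ p, (f p).1 = p.1) :
    mB b (θ.map f) = mB b θ := by
  unfold mB
  rw [integral_map (f := fun p : ℝ × ℝ ↦ b p.1) hf.aemeasurable
    (hb.comp measurable_fst).aestronglyMeasurable]
  simp only [hfst]

lemma map_mB_eq_iff_eq_map_mB (b : ℝ → ℝ) (hb : Measurable b) (γ μ : Measure (ℝ × ℝ)) :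
    γ.map (fun p : ℝ × ℝ ↦ (p.1, p.1 + mB b μ + p.2)) = μ ↔
      μ = γ.map (fun p : ℝ × ℝ ↦ (p.1, p.1 + mB b γ + p.2)) := by
  have hmB : ∀ c, mB b (γ.map (fun p : ℝ × ℝ ↦ (p.1, p.1 + c + p.2))) = mB b γ :=
    fun c ↦ mB_map_of_fst_eq b hb γ (by fun_prop) fun _ ↦ rfl
  constructor
  · intro h
    have hμγ : mB b μ = mB b γ := by rw [← h, hmB]
    rw [← hμγ, h]
  · rintro rfl
    rw [hmB]

lemma continuous_mB (b : ℝ → ℝ) (hb : Continuous b) (C : ℝ) (hbd : ∀ x, |b x| ≤ C) :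
    Continuous fun γ : ProbabilityMeasure (ℝ × ℝ) ↦ mB b γ :=
  ProbabilityMeasure.continuous_integral_boundedContinuousFunction <|
    .ofNormedAddCommGroup (fun p : ℝ × ℝ ↦ b p.1) (by fun_prop) C fun p ↦ hbd p.1

/-- Toy model: `ψ(θ,(y,ỹ)) = (y, y + m_b(θ) + ỹ)` and `Ψ_γ(μ) = γ ∘ ψ(μ,·)⁻¹`. For every
probability measure `γ` on `ℝ²`, the fixed point equation `μ = Ψ_γ(μ)` has the unique solution
`μ*(γ) = Ψ_γ(γ)`, and `γ ↦ Ψ_γ(γ)` is continuous for the weak topology. -/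
theorem stmt11 (b : ℝ → ℝ) (hb : Continuous b) (C : ℝ) (hbd : ∀ x, |b x| ≤ C)
    (hae : ∀ γ : ProbabilityMeasure (ℝ × ℝ),
      AEMeasurable (fun p : ℝ × ℝ => (p.1, p.1 + mB b (γ : Measure (ℝ × ℝ)) + p.2))
        (γ : Measure (ℝ × ℝ))) :
    (∀ γ : Measure (ℝ × ℝ), IsProbabilityMeasure γ →
      ∀ μ : Measure (ℝ × ℝ), IsProbabilityMeasure μ →
        (Measure.map (fun p : ℝ × ℝ => (p.1, p.1 + mB b μ + p.2)) γ = μ ↔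
          μ = Measure.map (fun p : ℝ × ℝ => (p.1, p.1 + mB b γ + p.2)) γ)) ∧
    Continuous (fun γ : ProbabilityMeasure (ℝ × ℝ) => γ.map (hae γ)) :=
  ⟨fun γ _ μ _ ↦ map_mB_eq_iff_eq_map_mB b hb.measurable γ μ,
    (ProbabilityMeasure.continuous_map_comp_prodMk_right
      (g := fun q : (ℝ × ℝ) × ℝ ↦ (q.1.1, q.1.1 + q.2 + q.1.2)) (by fun_prop)).comp
      (continuous_id.prodMk (continuous_mB b hb C hbd))⟩
end

section
/- Let γ₀ be the bivariate standard normal law on R², B ∈ B(R) a set with γ₀(∂(B × R)) = 0, and define ψ(μ,(y,ỹ)) = (y, y + μ(B × R)·ỹ). Set Ψ_γ(μ) = γ ∘ ψ(μ,·)⁻¹ and μ*(γ) := Ψ_γ(γ) (the unique solution of μ = Ψ_γ(μ)). Then μ* is continuous (for weak convergence) at every γ ∈ P(R²) with R(γ‖γ₀) < ∞, even though μ* may fail to be continuous on all of P(R²) when ∂(B × R) ≠ ∅. -/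
open MeasureTheory ProbabilityTheory Real Filter Topology
open scoped Classical ENNReal NNReal

/-- Second toy model: `ψ(μ,(y,ỹ)) = (y, y + μ(B × ℝ)·ỹ)`. -/
noncomputable def psiB (B : Set ℝ) (μ : Measure (ℝ × ℝ)) (p : ℝ × ℝ) : ℝ × ℝ :=
  (p.1, p.1 + (μ (B ×ˢ (Set.univ : Set ℝ))).toReal * p.2)

/-!
Writing `c(γ) = γ(B × ℝ)` and `Φ(c, (y, ỹ)) = (y, y + c ỹ)`, the law `μ*(γ)` is the push-forward
of `δ_{c(γ)} ⊗ γ` under the jointly continuous map `Φ`. Dirac masses, products and continuous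
push-forwards are all weakly continuous, so `μ*` is continuous wherever `c` is. Finite relative
entropy gives `γ ≪ γ₀`, hence `γ(∂(B × ℝ)) = 0`, and the portmanteau theorem makes `c` continuous
at `γ`.
-/

namespace MeasureTheory.ProbabilityMeasure

open TopologicalSpace Function

variable {C X Y : Type*}
  [TopologicalSpace C] [MeasurableSpace C] [BorelSpace C]
  [TopologicalSpace X] [SecondCountableTopology X] [MeasurableSpace X] [BorelSpace X]
  [TopologicalSpace Y] [MeasurableSpace Y] [BorelSpace Y]
  {Φ : C → X → Y}

lemma map_eq_map_diracProba_prod (hΦ : Continuous (uncurry Φ)) (c : C)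
    (ν : ProbabilityMeasure X) :
    ν.map (hΦ.uncurry_left c).measurable.aemeasurable =
      ((diracProba c).prod ν).map hΦ.measurable.aemeasurable := by
  apply toMeasure_injective
  rw [toMeasure_map, toMeasure_map, toMeasure_prod]
  change _ = ((Measure.dirac c).prod ν.toMeasure).map _
  rw [Measure.dirac_prod, Measure.map_map hΦ.measurable measurable_prodMk_left]
  rfl

variable [SecondCountableTopology C] [PseudoMetrizableSpace C] [PseudoMetrizableSpace X]

theorem continuous_map_of_continuous_uncurry (hΦ : Continuous (uncurry Φ)) :
    Continuous fun q : C × ProbabilityMeasure X =>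
      q.2.map (hΦ.uncurry_left q.1).measurable.aemeasurable := by
  simp only [map_eq_map_diracProba_prod hΦ]
  exact (continuous_map hΦ).comp
    (continuous_prod.comp (continuous_diracProba.prodMap continuous_id))

end MeasureTheory.ProbabilityMeasure

lemma MeasureTheory.ProbabilityMeasure.continuousAt_toMeasure_apply_toReal {X : Type*}
    [TopologicalSpace X] [MeasurableSpace X] [OpensMeasurableSpace X] [HasOuterApproxClosed X]
    {γ : ProbabilityMeasure X} {E : Set X} (hE : (γ : Measure X) (frontier E) = 0) :
    ContinuousAt (fun γ' : ProbabilityMeasure X => ((γ' : Measure X) E).toReal) γ :=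
  (ENNReal.tendsto_toReal (measure_ne_top _ _)).comp
    (ProbabilityMeasure.tendsto_measure_of_null_frontier_of_tendsto' tendsto_id hE)

lemma absolutelyContinuous_of_relEnt_lt_top {S : Type*} [MeasurableSpace S] {ν μ : Measure S}
    (h : relEnt ν μ < ⊤) : ν ≪ μ := by
  by_contra hac
  rw [relEnt, if_neg fun h' => hac h'.1] at h
  exact lt_irrefl _ h

section psiB

variable {B : Set ℝ}

lemma psiB_preimage_prod_univ (μ : Measure (ℝ × ℝ)) :
    psiB B μ ⁻¹' (B ×ˢ Set.univ) = B ×ˢ Set.univ := by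
  ext p
  simp [psiB]

lemma measurable_psiB (μ : Measure (ℝ × ℝ)) : Measurable (psiB B μ) := by
  unfold psiB
  fun_prop

lemma map_psiB_apply_prod_univ (hB : MeasurableSet B) (μ γ : Measure (ℝ × ℝ)) :
    γ.map (psiB B μ) (B ×ˢ Set.univ) = γ (B ×ˢ Set.univ) := by
  rw [Measure.map_apply (measurable_psiB μ) (hB.prod .univ), psiB_preimage_prod_univ]

lemma psiB_congr {μ ν : Measure (ℝ × ℝ)} (h : μ (B ×ˢ Set.univ) = ν (B ×ˢ Set.univ)) :
    psiB B μ = psiB B ν := by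
  unfold psiB
  rw [h]

/-- Both sides force `μ(B × ℝ) = γ(B × ℝ)`, after which `psiB B μ = psiB B γ`. -/
theorem map_psiB_eq_self_iff (hB : MeasurableSet B) (γ μ : Measure (ℝ × ℝ)) :
    γ.map (psiB B μ) = μ ↔ μ = γ.map (psiB B γ) := by
  constructor
  · intro h
    have hS : μ (B ×ˢ Set.univ) = γ (B ×ˢ Set.univ) := by
      rw [← h, map_psiB_apply_prod_univ hB]
    rw [← psiB_congr hS, h]
  · intro h
    have hS : μ (B ×ˢ Set.univ) = γ (B ×ˢ Set.univ) := by
      rw [h, map_psiB_apply_prod_univ hB]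
    rw [psiB_congr hS, h]

end psiB

/-- For a `γ₀`-continuity set `B × ℝ` (boundary of null `γ₀`-measure), `μ*(γ) := Ψ_γ(γ)` is
the unique solution of `μ = Ψ_γ(μ)`, and `μ*` is continuous for weak convergence at every
`γ` with `R(γ ‖ γ₀) < ∞`. -/
theorem stmt12 (B : Set ℝ) (hB : MeasurableSet B)
    (hbd : stdNormal2 (frontier (B ×ˢ (Set.univ : Set ℝ))) = 0)
    (hae : ∀ γ : ProbabilityMeasure (ℝ × ℝ),
      AEMeasurable (psiB B (γ : Measure (ℝ × ℝ))) (γ : Measure (ℝ × ℝ))) :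
    (∀ γ : Measure (ℝ × ℝ), IsProbabilityMeasure γ →
      ∀ μ : Measure (ℝ × ℝ), IsProbabilityMeasure μ →
        (Measure.map (psiB B μ) γ = μ ↔ μ = Measure.map (psiB B γ) γ)) ∧
    ∀ γ : ProbabilityMeasure (ℝ × ℝ), relEnt (γ : Measure (ℝ × ℝ)) stdNormal2 < ⊤ →
      ContinuousAt (fun γ' : ProbabilityMeasure (ℝ × ℝ) => γ'.map (hae γ')) γ := by
  refine ⟨fun γ _ μ _ => map_psiB_eq_self_iff hB γ μ, fun γ hγ => ?_⟩
  have hshear :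
      Continuous (Function.uncurry fun (c : ℝ) (p : ℝ × ℝ) => (p.1, p.1 + c * p.2)) := by
    fun_prop
  have hmass := ProbabilityMeasure.continuousAt_toMeasure_apply_toReal
    (absolutelyContinuous_of_relEnt_lt_top hγ hbd)
  exact (ProbabilityMeasure.continuous_map_of_continuous_uncurry hshear).continuousAt.comp
    (hmass.prodMk continuousAt_id)
end
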